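/- arXiv:1205.5443 — 2 statements merged into one kernel-verified Lean document; each statement's English description precedes it below -/
import Mathlib

section
/- Let F = Toeplitz(f^T, M) with f ∈ C^{L_f}, T = [I_N; 0] the truncation matrix, and w_k the k-th column of the normalized DFT matrix. Then the matrix K_k = F* T* w_k w_k^H T^T F^T restricted to its leading (N−L_f+1)×(N−L_f+1) block is a Toeplitz matrix. -/
open Matrix

/-- The leading `(N−L_f+1) × (N−L_f+1)` block of `K_k = F* T* w_k w_kᴴ Tᵀ Fᵀ` is a
Toeplitz matrix: entries with indices in the leading block depend only on `i − j`. -/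
theorem Kk_leading_block_toeplitz (N Lf P : ℕ) (hN : 0 < N) (hLf : 0 < Lf)
    (hNP : N ≤ P + Lf - 1) (f : Fin Lf → ℂ) (k : ℕ) :
    let ωN : ℂ := Complex.exp (2 * Real.pi * Complex.I / N)
    let w : Fin N → ℂ := fun m => (1 / Real.sqrt N : ℝ) * ωN ^ (-((k : ℤ) * (m : ℤ)))
    let F : Matrix (Fin P) (Fin (P + Lf - 1)) ℂ :=
      Matrix.of fun i j =>
        if h : (i : ℕ) ≤ (j : ℕ) ∧ (j : ℕ) - (i : ℕ) < Lf
          then f ⟨(j : ℕ) - (i : ℕ), h.2⟩ else 0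
    let T : Matrix (Fin (P + Lf - 1)) (Fin N) ℂ :=
      Matrix.of fun i j => if (i : ℕ) = (j : ℕ) then 1 else 0
    let K : Matrix (Fin P) (Fin P) ℂ :=
      (F.map star) * (T.map star) * vecMulVec w (fun m => star (w m)) * Tᵀ * Fᵀ
    ∀ i j i' j' : Fin P,
      (i : ℕ) ≤ N - Lf → (j : ℕ) ≤ N - Lf → (i' : ℕ) ≤ N - Lf → (j' : ℕ) ≤ N - Lf →
      (i : ℤ) - (j : ℤ) = (i' : ℤ) - (j' : ℤ) →
      K i j = K i' j' := by
  intro ωN w F T K i j i' j' hi hj hi' hj' hij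
  by_cases hNLf : N < Lf
  · have h0 : N - Lf = 0 := by omega
    have h1 : i = i' := Fin.ext (by omega)
    have h2 : j = j' := Fin.ext (by omega)
    rw [h1, h2]
  push_neg at hNLf
  have hω : ωN ≠ 0 := Complex.exp_ne_zero _
  have hσ : star ωN = ωN⁻¹ := by
    have h1 : star ωN = Complex.exp (-(2 * Real.pi * Complex.I / N)) := by
      rw [show (star ωN : ℂ) = (starRingEnd ℂ) ωN from rfl, ← Complex.exp_conj]
      congr 1
      simp [Complex.ext_iff, neg_div]
    rw [h1, Complex.exp_neg]
  have hs : ∀ m : ℤ, star (ωN ^ m) = ωN ^ (-m) := by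
    intro m
    rw [star_zpow₀, hσ, _root_.inv_zpow, ← _root_.zpow_neg]
  set c : ℂ := ((1 / Real.sqrt N : ℝ) : ℂ) with hc
  -- factorization of K
  have hA : F.map star * T.map star =
      Matrix.of (fun (a : Fin P) (m : Fin N) => star (F a (Fin.castLE hNP m))) := by
    ext a m
    simp only [mul_apply, Matrix.map_apply, Matrix.of_apply, T]
    rw [Finset.sum_eq_single (Fin.castLE hNP m)]
    · simp
    · intro p _ hp
      have : (p : ℕ) ≠ (m : ℕ) := by
        intro h; apply hp; exact Fin.ext (by simpa using h)
      simp [this]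
    · simp
  have hB : Tᵀ * Fᵀ =
      Matrix.of (fun (n : Fin N) (b : Fin P) => F b (Fin.castLE hNP n)) := by
    ext n b
    simp only [mul_apply, transpose_apply, Matrix.of_apply, T]
    rw [Finset.sum_eq_single (Fin.castLE hNP n)]
    · simp
    · intro p _ hp
      have : (p : ℕ) ≠ (n : ℕ) := by
        intro h; apply hp; exact Fin.ext (by simpa using h)
      simp [this]
    · simp
  have hK : ∀ a b : Fin P, K a b =
      (∑ m : Fin N, star (F a (Fin.castLE hNP m)) * w m) *
      (∑ n : Fin N, star (w n) * F b (Fin.castLE hNP n)) := by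
    intro a b
    have hassoc : K = (F.map star * T.map star) * vecMulVec w (fun m => star (w m)) * (Tᵀ * Fᵀ) := by
      simp only [K, Matrix.mul_assoc]
    rw [hassoc, hA, hB]
    simp only [mul_apply, vecMulVec_apply, Matrix.of_apply]
    rw [Finset.sum_mul_sum]
    rw [Finset.sum_comm]
    apply Finset.sum_congr rfl
    intro n _
    rw [Finset.sum_mul]
    apply Finset.sum_congr rfl
    intro m _
    ring
  -- shifted-sum lemma
  have key : ∀ a : Fin P, ∀ ha : (a : ℕ) ≤ N - Lf,
      (∑ m : Fin N, star (F a (Fin.castLE hNP m)) * w m) =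
      ∑ d : Fin Lf, star (f d) * w ⟨(a : ℕ) + d, by omega⟩ := by
    intro a ha
    have he : Function.Injective (fun d : Fin Lf => (⟨(a : ℕ) + d, by omega⟩ : Fin N)) := by
      intro d1 d2 h
      have := congrArg Fin.val h
      simp only at this
      exact Fin.ext (by omega)
    rw [show (Finset.univ : Finset (Fin N)) =
        (Finset.univ.map ⟨_, he⟩) ∪ ((Finset.univ : Finset (Fin N)) \ Finset.univ.map ⟨_, he⟩) by
      rw [Finset.union_sdiff_of_subset (Finset.subset_univ _)]]
    rw [Finset.sum_union (Finset.disjoint_sdiff), Finset.sum_map]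
    have h2 : ∀ m ∈ (Finset.univ : Finset (Fin N)) \ Finset.univ.map ⟨_, he⟩,
        star (F a (Fin.castLE hNP m)) * w m = 0 := by
      intro m hm
      simp only [Finset.mem_sdiff, Finset.mem_map, Finset.mem_univ, true_and,
        Function.Embedding.coeFn_mk] at hm
      have hnot : ¬((a : ℕ) ≤ (m : ℕ) ∧ (m : ℕ) - (a : ℕ) < Lf) := by
        intro hcon
        exact hm ⟨⟨(m : ℕ) - (a : ℕ), hcon.2⟩, Fin.ext (by simp only [Function.Embedding.coeFn_mk]; omega)⟩
      simp only [F, Matrix.of_apply, Fin.coe_castLE]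
      rw [dif_neg hnot]
      simp
    rw [Finset.sum_eq_zero h2, add_zero]
    apply Finset.sum_congr rfl
    intro d _
    congr 1
    simp only [F, Matrix.of_apply, Function.Embedding.coeFn_mk, Fin.coe_castLE]
    rw [dif_pos ⟨by simp, by simp⟩]
    have hfin : ∀ h : (a : ℕ) + (d : ℕ) - (a : ℕ) < Lf,
        (⟨(a : ℕ) + (d : ℕ) - (a : ℕ), h⟩ : Fin Lf) = d :=
      fun h => Fin.ext (show (a : ℕ) + (d : ℕ) - (a : ℕ) = (d : ℕ) by omega)
    rw [hfin]
  -- compute U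
  have hU : ∀ a : Fin P, (a : ℕ) ≤ N - Lf →
      (∑ m : Fin N, star (F a (Fin.castLE hNP m)) * w m) =
      ωN ^ (-((k : ℤ) * (a : ℤ))) *
        ∑ d : Fin Lf, star (f d) * (c * ωN ^ (-((k : ℤ) * (d : ℤ)))) := by
    intro a ha
    rw [key a ha, Finset.mul_sum]
    refine Finset.sum_congr rfl fun d _ => ?_
    show star (f d) * (c * ωN ^ (-((k : ℤ) * ((((a : ℕ) + (d : ℕ) : ℕ) : ℤ))))) = _
    rw [show (-((k : ℤ) * ((((a : ℕ) + (d : ℕ) : ℕ) : ℤ)))) =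
        (-((k : ℤ) * (a : ℤ))) + (-((k : ℤ) * (d : ℤ))) by push_cast; ring,
      zpow_add₀ hω]
    ring
  -- V as star of U
  have hVU : ∀ b : Fin P,
      (∑ n : Fin N, star (w n) * F b (Fin.castLE hNP n)) =
      star (∑ m : Fin N, star (F b (Fin.castLE hNP m)) * w m) := by
    intro b
    rw [star_sum]
    apply Finset.sum_congr rfl
    intro n _
    have hterm : star (star (F b (Fin.castLE hNP n)) * w n) =
        star (w n) * F b (Fin.castLE hNP n) := by
      rw [StarMul.star_mul, star_star]
    rw [hterm]
  set C : ℂ := ∑ d : Fin Lf, star (f d) * (c * ωN ^ (-((k : ℤ) * (d : ℤ)))) with hC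
  rw [hK i j, hK i' j', hVU j, hVU j', hU i hi, hU j hj, hU i' hi', hU j' hj']
  rw [StarMul.star_mul, hs, StarMul.star_mul, hs, neg_neg, neg_neg]
  have hpow : ωN ^ (-((k : ℤ) * (i : ℤ))) * ωN ^ ((k : ℤ) * (j : ℤ)) =
      ωN ^ (-((k : ℤ) * (i' : ℤ))) * ωN ^ ((k : ℤ) * (j' : ℤ)) := by
    rw [← zpow_add₀ hω, ← zpow_add₀ hω]
    congr 1
    linear_combination (-(k : ℤ)) * hij
  calc ωN ^ (-((k : ℤ) * (i : ℤ))) * C * (star C * ωN ^ ((k : ℤ) * (j : ℤ)))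
      = (ωN ^ (-((k : ℤ) * (i : ℤ))) * ωN ^ ((k : ℤ) * (j : ℤ))) * (C * star C) := by ring
    _ = (ωN ^ (-((k : ℤ) * (i' : ℤ))) * ωN ^ ((k : ℤ) * (j' : ℤ))) * (C * star C) := by rw [hpow]
    _ = ωN ^ (-((k : ℤ) * (i' : ℤ))) * C * (star C * ωN ^ ((k : ℤ) * (j' : ℤ))) := by ring
end

section
/- Consider the SDP: minimize tr(Φ_P R) over R ⪰ 0 subject to tr((Φ_S(k) − γ_k Φ_N(k)) R) ≥ σ² γ_k for k in an index set I, where Φ_P ≻ 0, each Φ_N(k) ⪰ 0, each Φ_S(k) has rank one, and γ_k, σ² > 0. If at an optimal solution R* all constraints except exactly one are slack (strict inequality), then R* has rank one. -/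
open Matrix ComplexOrder

namespace SdpAux

variable {n : ℕ}

lemma trace_vecMulVec_mul (a b : Fin n → ℂ) (R : Matrix (Fin n) (Fin n) ℂ) :
    (vecMulVec a b * R).trace = b ⬝ᵥ (R *ᵥ a) := by
  simp only [Matrix.trace, Matrix.diag, Matrix.mul_apply, vecMulVec_apply, dotProduct,
    Matrix.mulVec, Finset.mul_sum]
  rw [Finset.sum_comm]
  exact Finset.sum_congr rfl fun k _ => Finset.sum_congr rfl fun i _ => by ring

lemma vecMulVec_mulVec' (a b x : Fin n → ℂ) : vecMulVec a b *ᵥ x = (b ⬝ᵥ x) • a := by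
  ext i
  simp only [Matrix.mulVec, vecMulVec_apply, dotProduct, Pi.smul_apply, smul_eq_mul,
    Finset.sum_mul, Finset.mul_sum]
  exact Finset.sum_congr rfl fun j _ => by ring

lemma posSemidef_outer (w : Fin n → ℂ) : (vecMulVec w (star w)).PosSemidef := by
  refine Matrix.PosSemidef.of_dotProduct_mulVec_nonneg ?_ ?_
  · ext i j
    simp only [conjTranspose_apply, vecMulVec_apply, Pi.star_apply, star_mul', star_star]
    ring
  · intro x
    rw [vecMulVec_mulVec', dotProduct_smul, smul_eq_mul]
    have h : star x ⬝ᵥ w = star (star w ⬝ᵥ x) := by rw [star_dotProduct]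
    rw [h]
    exact mul_star_self_nonneg _

lemma posSemidef_smul_real {M : Matrix (Fin n) (Fin n) ℂ} (hM : M.PosSemidef) {r : ℝ}
    (hr : 0 ≤ r) : (((r : ℝ) : ℂ) • M).PosSemidef := by
  refine Matrix.PosSemidef.of_dotProduct_mulVec_nonneg ?_ ?_
  · have := hM.1
    unfold IsHermitian at this ⊢
    rw [conjTranspose_smul, this]
    congr 1
    simp
  · intro x
    rw [smul_mulVec, dotProduct_smul, smul_eq_mul]
    exact mul_nonneg (Complex.zero_le_real.mpr hr) (hM.dotProduct_mulVec_nonneg x)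

lemma diag_quadform (M : Matrix (Fin n) (Fin n) ℂ) (i : Fin n) :
    star (Pi.single i 1 : Fin n → ℂ) ⬝ᵥ (M *ᵥ Pi.single i 1) = M i i := by
  have h : star (Pi.single i 1 : Fin n → ℂ) = Pi.single i 1 := by
    ext j
    by_cases hj : j = i <;> simp [hj, Pi.single_apply]
  rw [h, mulVec_single, single_dotProduct]
  simp

lemma psd_trace_nonneg {M : Matrix (Fin n) (Fin n) ℂ} (hM : M.PosSemidef) : 0 ≤ M.trace :=
  Finset.sum_nonneg fun i _ => by
    have := hM.dotProduct_mulVec_nonneg (Pi.single i 1)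
    rwa [diag_quadform] at this

open scoped MatrixOrder in
lemma posSemidef_iff_eq_transpose_mul_self {R : Matrix (Fin n) (Fin n) ℂ} :
    R.PosSemidef ↔ ∃ B : Matrix (Fin n) (Fin n) ℂ, R = Bᴴ * B := by
  constructor
  · intro hR
    obtain ⟨B, hB⟩ := CStarAlgebra.nonneg_iff_eq_star_mul_self.mp hR.nonneg
    exact ⟨B, hB⟩
  · rintro ⟨B, rfl⟩
    exact posSemidef_conjTranspose_mul_self B

lemma trace_mul_psd_nonneg {A B : Matrix (Fin n) (Fin n) ℂ} (hA : A.PosSemidef)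
    (hB : B.PosSemidef) : 0 ≤ (A * B).trace := by
  obtain ⟨D, rfl⟩ := posSemidef_iff_eq_transpose_mul_self.mp hB
  have h1 : (A * (Dᴴ * D)).trace = (D * A * Dᴴ).trace := by
    rw [← Matrix.mul_assoc, Matrix.trace_mul_cycle]
  rw [h1]
  exact psd_trace_nonneg (hA.mul_mul_conjTranspose_same D)

lemma trace_mul_posdef_eq_zero {A B : Matrix (Fin n) (Fin n) ℂ} (hA : A.PosDef)
    (hB : B.PosSemidef) (h : (A * B).trace = 0) : B = 0 := by
  obtain ⟨D, rfl⟩ := posSemidef_iff_eq_transpose_mul_self.mp hB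
  suffices hD : D = 0 by rw [hD]; simp
  have h1 : (A * (Dᴴ * D)).trace = (D * A * Dᴴ).trace := by
    rw [← Matrix.mul_assoc, Matrix.trace_mul_cycle]
  rw [h1] at h
  have hpsd := hA.posSemidef.mul_mul_conjTranspose_same D
  have hdiag : ∀ i, (D * A * Dᴴ) i i = 0 := by
    have hnn : ∀ i ∈ Finset.univ, 0 ≤ (D * A * Dᴴ) i i := fun i _ => by
      have := hpsd.dotProduct_mulVec_nonneg (Pi.single i 1)
      rwa [diag_quadform] at this
    intro i
    exact (Finset.sum_eq_zero_iff_of_nonneg hnn).mp h i (Finset.mem_univ i)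
  ext i j
  by_contra hij
  have hrow : star (D i) ≠ (0 : Fin n → ℂ) := by
    intro h0
    apply hij
    have := congrFun h0 j
    simpa using congrArg star this
  have hq := hA.dotProduct_mulVec_pos hrow
  have hcalc : star (star (D i)) ⬝ᵥ (A *ᵥ star (D i)) = (D * A * Dᴴ) i i := by
    simp only [star_star, Matrix.mul_apply, conjTranspose_apply, dotProduct, Matrix.mulVec,
      Finset.mul_sum, Finset.sum_mul]
    rw [Finset.sum_comm]
    refine Finset.sum_congr rfl fun k _ => Finset.sum_congr rfl fun l _ => ?_
    simp [Pi.star_apply]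
    ring
  rw [hcalc, hdiag i] at hq
  exact lt_irrefl _ hq

lemma quad_factor (B : Matrix (Fin n) (Fin n) ℂ) (y : Fin n → ℂ) :
    star y ⬝ᵥ ((Bᴴ * B) *ᵥ y) = star (B *ᵥ y) ⬝ᵥ (B *ᵥ y) := by
  rw [← mulVec_mulVec, dotProduct_mulVec, vecMul_conjTranspose, star_star]

lemma dot_self_eq_norm (y : Fin n → ℂ) :
    star y ⬝ᵥ y = ((‖(WithLp.equiv 2 (Fin n → ℂ)).symm y‖ ^ 2 : ℝ) : ℂ) := by
  rw [dotProduct_comm, ← EuclideanSpace.inner_toLp_toLp]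
  exact_mod_cast inner_self_eq_norm_sq_to_K ((WithLp.equiv 2 (Fin n → ℂ)).symm y)

lemma psd_sub_outer {R : Matrix (Fin n) (Fin n) ℂ} (hR : R.PosSemidef)
    (v : Fin n → ℂ) {ρ : ℝ} (hρ : 0 < ρ) (hα : star v ⬝ᵥ (R *ᵥ v) = (ρ : ℂ)) :
    (R - ((ρ⁻¹ : ℝ) : ℂ) • vecMulVec (R *ᵥ v) (star (R *ᵥ v))).PosSemidef := by
  have houter := posSemidef_outer (R *ᵥ v)
  obtain ⟨B, hBR⟩ := posSemidef_iff_eq_transpose_mul_self.mp hR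
  set w : Fin n → ℂ := R *ᵥ v with hw
  refine Matrix.PosSemidef.of_dotProduct_mulVec_nonneg ?_ ?_
  · have h1 := houter.1
    have h2 := hR.1
    unfold IsHermitian at h1 h2 ⊢
    rw [conjTranspose_sub, conjTranspose_smul, h1, h2]
    congr 1
    simp [Complex.star_def, Complex.conj_ofReal]
  · intro x
    set a : EuclideanSpace ℂ (Fin n) := (WithLp.equiv 2 (Fin n → ℂ)).symm (B *ᵥ v) with ha
    set b : EuclideanSpace ℂ (Fin n) := (WithLp.equiv 2 (Fin n → ℂ)).symm (B *ᵥ x) with hb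
    set c : ℂ := inner ℂ a b with hcdef
    have hρa : ρ = ‖a‖ ^ 2 := by
      have h := hα
      rw [hw, hBR, quad_factor, dot_self_eq_norm] at h
      exact_mod_cast h.symm
    have hc : star w ⬝ᵥ x = c := by
      rw [hw, hBR, ← mulVec_mulVec, star_mulVec, conjTranspose_conjTranspose,
        ← dotProduct_mulVec]
      rw [dotProduct_comm]
      rfl
    have hcc : (star w ⬝ᵥ x) * (star x ⬝ᵥ w) = ((‖c‖ ^ 2 : ℝ) : ℂ) := by
      have h1 : star x ⬝ᵥ w = star (star w ⬝ᵥ x) := by rw [star_dotProduct]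
      rw [h1, hc, Complex.star_def, Complex.mul_conj]
      simp [Complex.normSq_eq_norm_sq]
    have hq : star x ⬝ᵥ ((R - ((ρ⁻¹ : ℝ) : ℂ) • vecMulVec w (star w)) *ᵥ x)
        = ((‖b‖ ^ 2 : ℝ) : ℂ) - ((ρ⁻¹ : ℝ) : ℂ) * ((‖c‖ ^ 2 : ℝ) : ℂ) := by
      rw [sub_mulVec, dotProduct_sub, smul_mulVec, dotProduct_smul, smul_eq_mul,
        vecMulVec_mulVec', dotProduct_smul, smul_eq_mul, hcc, hBR, quad_factor,
        dot_self_eq_norm]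
    rw [hq, ← Complex.ofReal_mul, ← Complex.ofReal_sub]
    rw [Complex.zero_le_real]
    have hCS : ‖c‖ ≤ ‖a‖ * ‖b‖ := norm_inner_le_norm a b
    have h1 : ‖c‖ ^ 2 ≤ ρ * ‖b‖ ^ 2 := by
      rw [hρa]
      nlinarith [norm_nonneg a, norm_nonneg b, norm_nonneg c]
    have h2 : ρ⁻¹ * ‖c‖ ^ 2 ≤ ρ⁻¹ * (ρ * ‖b‖ ^ 2) :=
      mul_le_mul_of_nonneg_left h1 (le_of_lt (inv_pos.mpr hρ))
    rw [← mul_assoc, inv_mul_cancel₀ (ne_of_gt hρ), one_mul] at h2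
    linarith

end SdpAux

open SdpAux

/-- For the SDP `min tr(Φ_P R)` over `R ⪰ 0` subject to
`tr((Φ_S(k) − γ_k Φ_N(k)) R) ≥ σ² γ_k` for `k ∈ I`, with `Φ_P ≻ 0`, `Φ_N(k) ⪰ 0`,
`Φ_S(k)` rank one, and `γ_k, σ² > 0`: if at a nontrivial optimal solution `R*` all
constraints except exactly one are slack, then `R*` has rank one. -/
theorem sdp_optimal_rank_one (n : ℕ) (ι : Type*) [Fintype ι]
    (ΦP : Matrix (Fin n) (Fin n) ℂ) (ΦN ΦS : ι → Matrix (Fin n) (Fin n) ℂ)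
    (v : ι → Fin n → ℂ) (γ : ι → ℝ) (σ2 : ℝ)
    (hP : ΦP.PosDef) (hNk : ∀ k, (ΦN k).PosSemidef)
    (hSk : ∀ k, ΦS k = vecMulVec (v k) (fun i => star (v k i))) (hvk : ∀ k, v k ≠ 0)
    (hγ : ∀ k, 0 < γ k) (hσ : 0 < σ2)
    (Rstar : Matrix (Fin n) (Fin n) ℂ)
    (hfeas : Rstar.PosSemidef ∧
      ∀ k, σ2 * γ k ≤ ((ΦS k - ((γ k : ℝ) : ℂ) • ΦN k) * Rstar).trace.re)
    (hopt : ∀ R : Matrix (Fin n) (Fin n) ℂ,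
      R.PosSemidef →
      (∀ k, σ2 * γ k ≤ ((ΦS k - ((γ k : ℝ) : ℂ) • ΦN k) * R).trace.re) →
      (ΦP * Rstar).trace.re ≤ (ΦP * R).trace.re)
    (hne : Rstar ≠ 0)
    -- all constraints except exactly one are satisfied with strict inequality
    (hslack : ∃ i : ι, ∀ j : ι, j ≠ i →
      σ2 * γ j < ((ΦS j - ((γ j : ℝ) : ℂ) • ΦN j) * Rstar).trace.re) :
    Rstar.rank = 1 := by
  classical
  obtain ⟨hRpsd, hcons⟩ := hfeas
  obtain ⟨i, hsl⟩ := hslack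
  -- trace of ΦS k against any matrix
  have htrS : ∀ k (M : Matrix (Fin n) (Fin n) ℂ),
      (ΦS k * M).trace = star (v k) ⬝ᵥ (M *ᵥ v k) := fun k M => by
    rw [hSk k]
    exact trace_vecMulVec_mul (v k) _ M
  have hexp : ∀ k (M : Matrix (Fin n) (Fin n) ℂ),
      (((ΦS k - ((γ k : ℝ) : ℂ) • ΦN k) * M).trace).re
        = ((ΦS k * M).trace).re - γ k * ((ΦN k * M).trace).re := fun k M => by
    rw [Matrix.sub_mul, Matrix.smul_mul, trace_sub, trace_smul, smul_eq_mul]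
    simp [Complex.sub_re, Complex.mul_re]
  have hNtr : ∀ k (M : Matrix (Fin n) (Fin n) ℂ), M.PosSemidef →
      0 ≤ ((ΦN k * M).trace).re := fun k M hM =>
    (Complex.nonneg_iff.mp (trace_mul_psd_nonneg (hNk k) hM)).1
  set α : ℂ := star (v i) ⬝ᵥ (Rstar *ᵥ v i) with hαdef
  have hα0 : 0 ≤ α := hRpsd.dotProduct_mulVec_nonneg (v i)
  have hαne : α ≠ 0 := by
    intro h0
    have hci := hcons i
    rw [hexp] at hci
    rw [htrS i Rstar, ← hαdef, h0] at hci
    have h1 : 0 < σ2 * γ i := mul_pos hσ (hγ i)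
    have h2 : 0 ≤ γ i * ((ΦN i * Rstar).trace).re :=
      mul_nonneg (hγ i).le (hNtr i Rstar hRpsd)
    simp only [Complex.zero_re] at hci
    linarith
  have him : α.im = 0 := (Complex.nonneg_iff.mp hα0).2.symm
  have hρpos : 0 < α.re := by
    rcases lt_or_eq_of_le (Complex.nonneg_iff.mp hα0).1 with h | h
    · exact h
    · exfalso
      apply hαne
      apply Complex.ext
      · simpa using h.symm
      · simpa using him
  have hαeq : α = ((α.re : ℝ) : ℂ) := by
    apply Complex.ext <;> simp [him]
  set w : Fin n → ℂ := Rstar *ᵥ v i with hwdef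
  set ρ : ℝ := α.re with hρdef
  set R' : Matrix (Fin n) (Fin n) ℂ := ((ρ⁻¹ : ℝ) : ℂ) • vecMulVec w (star w) with hR'def
  have hsub : (Rstar - R').PosSemidef := by
    rw [hR'def, hwdef]
    exact psd_sub_outer hRpsd (v i) hρpos (by rw [← hαdef]; exact hαeq)
  have hR'psd : R'.PosSemidef :=
    posSemidef_smul_real (posSemidef_outer w) (inv_nonneg.mpr hρpos.le)
  -- trace of ΦS i against R' equals α
  have hswv : star w ⬝ᵥ (v i) = α := by
    rw [star_dotProduct, ← hαdef, hαeq]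
    simp [Complex.star_def, Complex.conj_ofReal]
  have htrS_R' : (ΦS i * R').trace = α := by
    rw [htrS i R', hR'def, smul_mulVec, dotProduct_smul, vecMulVec_mulVec',
      dotProduct_smul, smul_eq_mul, smul_eq_mul, hswv, ← hαdef]
    rw [hαeq]
    have hρne : ((ρ : ℝ) : ℂ) ≠ 0 := by
      exact_mod_cast hρpos.ne'
    push_cast
    field_simp
  -- monotonicity of traces against PSD matrices
  have hmono : ∀ (A : Matrix (Fin n) (Fin n) ℂ), A.PosSemidef →
      ((A * R').trace).re ≤ ((A * Rstar).trace).re := by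
    intro A hA
    have h := (Complex.nonneg_iff.mp (trace_mul_psd_nonneg hA hsub)).1
    rw [Matrix.mul_sub, trace_sub, Complex.sub_re] at h
    linarith
  -- constraint i holds at R'
  have hfi' : σ2 * γ i ≤ (((ΦS i - ((γ i : ℝ) : ℂ) • ΦN i) * R').trace).re := by
    rw [hexp]
    have h1 := hcons i
    rw [hexp] at h1
    rw [htrS i Rstar, ← hαdef] at h1
    rw [htrS_R']
    have h2 : γ i * ((ΦN i * R').trace).re ≤ γ i * ((ΦN i * Rstar).trace).re :=
      mul_le_mul_of_nonneg_left (hmono (ΦN i) (hNk i)) (hγ i).le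
    linarith
  -- choose the step size t
  haveI : Nonempty ι := ⟨i⟩
  set g : ι → ℝ := fun j =>
    if 0 < (((ΦS j - ((γ j : ℝ) : ℂ) • ΦN j) * Rstar).trace).re
            - (((ΦS j - ((γ j : ℝ) : ℂ) • ΦN j) * R').trace).re ∧ j ≠ i
    then ((((ΦS j - ((γ j : ℝ) : ℂ) • ΦN j) * Rstar).trace).re - σ2 * γ j) /
         (2 * ((((ΦS j - ((γ j : ℝ) : ℂ) • ΦN j) * Rstar).trace).re
               - (((ΦS j - ((γ j : ℝ) : ℂ) • ΦN j) * R').trace).re))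
    else 1
    with hgdef
  have hgj : ∀ j, g j =
      (if 0 < (((ΦS j - ((γ j : ℝ) : ℂ) • ΦN j) * Rstar).trace).re
            - (((ΦS j - ((γ j : ℝ) : ℂ) • ΦN j) * R').trace).re ∧ j ≠ i
      then ((((ΦS j - ((γ j : ℝ) : ℂ) • ΦN j) * Rstar).trace).re - σ2 * γ j) /
           (2 * ((((ΦS j - ((γ j : ℝ) : ℂ) • ΦN j) * Rstar).trace).re
                 - (((ΦS j - ((γ j : ℝ) : ℂ) • ΦN j) * R').trace).re))
      else 1) := fun j => rfl
  have hgpos : ∀ j, 0 < g j := by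
    intro j
    rw [hgj]
    by_cases hcond : 0 < (((ΦS j - ((γ j : ℝ) : ℂ) • ΦN j) * Rstar).trace).re
        - (((ΦS j - ((γ j : ℝ) : ℂ) • ΦN j) * R').trace).re ∧ j ≠ i
    · rw [if_pos hcond]
      have hsj := hsl j hcond.2
      have h0 : 0 < σ2 * γ j := mul_pos hσ (hγ j)
      apply div_pos <;> [linarith; linarith [hcond.1]]
    · rw [if_neg hcond]; norm_num
  set t : ℝ := min 1 (Finset.univ.inf' Finset.univ_nonempty g) with htdef
  have ht0 : 0 < t := by
    rw [htdef]
    apply lt_min one_pos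
    rw [Finset.lt_inf'_iff]
    exact fun j _ => hgpos j
  have ht1 : t ≤ 1 := min_le_left _ _
  have htj : ∀ j, j ≠ i →
      t * ((((ΦS j - ((γ j : ℝ) : ℂ) • ΦN j) * Rstar).trace).re
           - (((ΦS j - ((γ j : ℝ) : ℂ) • ΦN j) * R').trace).re)
        ≤ (((ΦS j - ((γ j : ℝ) : ℂ) • ΦN j) * Rstar).trace).re - σ2 * γ j := by
    intro j hj
    have hsj := hsl j hj
    by_cases hD : 0 < (((ΦS j - ((γ j : ℝ) : ℂ) • ΦN j) * Rstar).trace).re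
        - (((ΦS j - ((γ j : ℝ) : ℂ) • ΦN j) * R').trace).re
    · have hg : t ≤ g j := le_trans (min_le_right _ _) (Finset.inf'_le g (Finset.mem_univ j))
      rw [hgj, if_pos ⟨hD, hj⟩] at hg
      set D : ℝ := (((ΦS j - ((γ j : ℝ) : ℂ) • ΦN j) * Rstar).trace).re
        - (((ΦS j - ((γ j : ℝ) : ℂ) • ΦN j) * R').trace).re with hDdef
      set s : ℝ := (((ΦS j - ((γ j : ℝ) : ℂ) • ΦN j) * Rstar).trace).re - σ2 * γ j with hsdef
      have hs0 : 0 < s := by rw [hsdef]; linarith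
      have hkey : (s / (2 * D)) * D = s / 2 := by
        field_simp
      have h2 : t * D ≤ (s / (2 * D)) * D := mul_le_mul_of_nonneg_right hg hD.le
      rw [hkey] at h2
      have h3 : s / 2 ≤ s := by linarith
      exact le_trans h2 h3
    · push_neg at hD
      have : t * ((((ΦS j - ((γ j : ℝ) : ℂ) • ΦN j) * Rstar).trace).re
          - (((ΦS j - ((γ j : ℝ) : ℂ) • ΦN j) * R').trace).re) ≤ 0 :=
        mul_nonpos_of_nonneg_of_nonpos ht0.le (by linarith)
      have h0 : 0 < σ2 * γ j := mul_pos hσ (hγ j)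
      linarith
  -- the perturbed matrix
  set T : Matrix (Fin n) (Fin n) ℂ :=
    (((1 - t : ℝ) : ℂ)) • Rstar + ((t : ℝ) : ℂ) • R' with hTdef
  have hTpsd : T.PosSemidef :=
    (posSemidef_smul_real hRpsd (by linarith)).add (posSemidef_smul_real hR'psd ht0.le)
  have hcombo : ∀ (A : Matrix (Fin n) (Fin n) ℂ),
      ((A * T).trace).re = (1 - t) * ((A * Rstar).trace).re + t * ((A * R').trace).re := by
    intro A
    rw [hTdef, Matrix.mul_add, Matrix.mul_smul, Matrix.mul_smul, trace_add, trace_smul,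
      trace_smul, Complex.add_re]
    simp [Complex.mul_re]
  have hTfeas : ∀ k, σ2 * γ k ≤ (((ΦS k - ((γ k : ℝ) : ℂ) • ΦN k) * T).trace).re := by
    intro k
    rw [hcombo]
    by_cases hk : k = i
    · subst hk
      have h1 := hcons k
      nlinarith [hfi', ht0, ht1]
    · have h1 := htj k hk
      have h2 := hsl k hk
      nlinarith
  have hop := hopt T hTpsd hTfeas
  rw [hcombo ΦP] at hop
  have hYX : ((ΦP * R').trace).re ≤ ((ΦP * Rstar).trace).re := hmono ΦP hP.posSemidef
  have hXY : ((ΦP * Rstar).trace).re ≤ ((ΦP * R').trace).re := by nlinarith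
  have hzero : ((ΦP * (Rstar - R')).trace).re = 0 := by
    rw [Matrix.mul_sub, trace_sub, Complex.sub_re]
    linarith
  have h0c : (ΦP * (Rstar - R')).trace = 0 := by
    have hnn := Complex.nonneg_iff.mp (trace_mul_psd_nonneg hP.posSemidef hsub)
    exact Complex.ext hzero hnn.2.symm
  have hReq : Rstar = R' := sub_eq_zero.mp (trace_mul_posdef_eq_zero hP hsub h0c)
  -- rank computation
  have hrank_le : Rstar.rank ≤ 1 := by
    rw [hReq, hR'def, Matrix.vecMulVec_eq (Fin 1), ← Matrix.smul_mul]
    calc (((((ρ⁻¹ : ℝ) : ℂ)) • Matrix.replicateCol (Fin 1) w * Matrix.replicateRow (Fin 1) (star w)).rank)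
        ≤ ((((ρ⁻¹ : ℝ) : ℂ)) • Matrix.replicateCol (Fin 1) w).rank := Matrix.rank_mul_le_left _ _
      _ ≤ Fintype.card (Fin 1) := Matrix.rank_le_card_width _
      _ = 1 := by simp
  have hwne : w ≠ 0 := by
    intro h0
    apply hαne
    rw [hαdef, h0, dotProduct_zero]
  have hrank_ne : Rstar.rank ≠ 0 := by
    intro h0
    have hfin : Module.finrank ℂ (LinearMap.range Rstar.mulVecLin) = 0 := h0
    rw [Submodule.finrank_eq_zero] at hfin
    have hwmem : w ∈ LinearMap.range Rstar.mulVecLin := ⟨v i, rfl⟩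
    rw [hfin, Submodule.mem_bot] at hwmem
    exact hwne hwmem
  omega
end
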